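/- arXiv:0811.0168 — 5 statements merged into one kernel-verified Lean document; each statement's English description precedes it below -/
import Mathlib

section
/- The sequence defined by a_1 = 1, a_2 = 3, a_{2n-1} = 2a_{n-1} + n and a_{2n} = a_{n-1} + a_n + n + 1 for n ≥ 2 satisfies a_{2^n - 1} = n·2^{n-1} for all natural numbers n ≥ 1. -/
theorem stmt_0 (a : ℕ → ℕ) (h1 : a 1 = 1) (h2 : a 2 = 3)
    (hodd : ∀ n : ℕ, 2 ≤ n → a (2 * n - 1) = 2 * a (n - 1) + n)
    (heven : ∀ n : ℕ, 2 ≤ n → a (2 * n) = a (n - 1) + a n + n + 1) :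
    ∀ n : ℕ, 1 ≤ n → a (2 ^ n - 1) = n * 2 ^ (n - 1) := by
  intro n hn
  induction n, hn using Nat.le_induction with
  | base => simpa using h1
  | succ n hn ih =>
    have h2n : 2 ≤ 2 ^ n := by
      calc 2 = 2 ^ 1 := rfl
      _ ≤ 2 ^ n := Nat.pow_le_pow_right (by norm_num) hn
    have := hodd (2 ^ n) h2n
    rw [← pow_succ'] at this
    rw [this, ih]
    have h1n : 2 ^ n - 1 = 2 ^ n - 1 := rfl
    have : n - 1 + 1 = n := Nat.sub_add_cancel hn
    rw [show n + 1 - 1 = n from rfl]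
    calc 2 * (n * 2 ^ (n - 1)) + 2 ^ n = n * (2 * 2 ^ (n-1)) + 2 ^ n := by ring
    _ = n * 2 ^ n + 2 ^ n := by rw [← pow_succ', Nat.sub_add_cancel hn]
    _ = (n + 1) * 2 ^ n := by ring
end

section
/- The sequence defined by a_1 = 1, a_2 = 3, a_{2n-1} = 2a_{n-1} + n and a_{2n} = a_{n-1} + a_n + n + 1 for n ≥ 2 satisfies a_n < (n/2)·log₂(2n) for all n > 10. -/
lemma base_lem (A m : ℕ) (hm : 0 < m) (h : 2^(2*A+1) ≤ (2*m)^m) :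
    (A:ℝ) < (m:ℝ)/2 * Real.logb 2 (2*m) := by
  have hm' : (0:ℝ) < m := by exact_mod_cast hm
  have hl2 : (0:ℝ) < Real.log 2 := Real.log_pos (by norm_num)
  have hr : ((2:ℝ))^(2*A+1) ≤ (2*(m:ℝ))^m := by exact_mod_cast h
  have hlog : ((2*A+1:ℕ):ℝ) * Real.log 2 ≤ (m:ℝ) * Real.log (2*(m:ℝ)) := by
    have h0 : (0:ℝ) < (2:ℝ)^(2*A+1) := by positivity
    have := Real.log_le_log h0 hr
    rw [Real.log_pow, Real.log_pow] at this
    exact_mod_cast this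
  have key : (m:ℝ)/2 * Real.logb 2 (2*(m:ℝ)) = (m * Real.log (2*(m:ℝ)))/(2*Real.log 2) := by
    rw [Real.logb]; ring
  rw [key, lt_div_iff₀ (by positivity)]
  push_cast at hlog
  nlinarith

lemma odd_step (x K : ℝ) (hK : 12 ≤ K)
    (h1 : x < (K-1)/2 * Real.logb 2 (2*(K-1))) :
    2*x + K < (2*K-1)/2 * Real.logb 2 (2*(2*K-1)) := by
  have hL1 : (1:ℝ) ≤ Real.logb 2 (2*(K-1)) := by
    have : Real.logb 2 2 ≤ Real.logb 2 (2*(K-1)) :=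
      Real.logb_le_logb_of_le (by norm_num : (1:ℝ) < 2) (by nlinarith) (by nlinarith)
    simpa using this
  have hmono : Real.logb 2 (2*(2*(K-1))) ≤ Real.logb 2 (2*(2*K-1)) :=
    Real.logb_le_logb_of_le (by norm_num : (1:ℝ) < 2) (by nlinarith) (by nlinarith)
  have hsplit : Real.logb 2 (2*(2*(K-1))) = 1 + Real.logb 2 (2*(K-1)) := by
    rw [show (2*(2*(K-1)):ℝ) = 2 * (2*(K-1)) by ring,
      Real.logb_mul (by norm_num) (by nlinarith)]
    simp
  nlinarith

lemma even_step (x y K : ℝ) (hK : 12 ≤ K)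
    (h1 : x < (K-1)/2 * Real.logb 2 (2*(K-1)))
    (h2 : y < K/2 * Real.logb 2 (2*K)) :
    x + y + K + 1 < (2*K)/2 * Real.logb 2 (2*(2*K)) := by
  have hmono : Real.logb 2 (2*(K-1)) ≤ Real.logb 2 (2*K) :=
    Real.logb_le_logb_of_le (by norm_num : (1:ℝ) < 2) (by nlinarith) (by nlinarith)
  have hL2 : (2:ℝ) ≤ Real.logb 2 (2*K) := by
    have h4 : Real.logb 2 4 ≤ Real.logb 2 (2*K) :=
      Real.logb_le_logb_of_le (by norm_num : (1:ℝ) < 2) (by nlinarith) (by nlinarith)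
    have : Real.logb 2 4 = 2 := by
      rw [show (4:ℝ) = 2*2 by norm_num, Real.logb_mul (by norm_num) (by norm_num)]
      norm_num
    linarith
  have hsplit : Real.logb 2 (2*(2*K)) = 1 + Real.logb 2 (2*K) := by
    rw [Real.logb_mul (by norm_num) (by nlinarith)]; simp
  nlinarith

theorem stmt_1 (a : ℕ → ℕ) (h1 : a 1 = 1) (h2 : a 2 = 3)
    (hodd : ∀ n : ℕ, 2 ≤ n → a (2 * n - 1) = 2 * a (n - 1) + n)
    (heven : ∀ n : ℕ, 2 ≤ n → a (2 * n) = a (n - 1) + a n + n + 1) :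
    ∀ n : ℕ, 10 < n → (a n : ℝ) < (n : ℝ) / 2 * Real.logb 2 (2 * n) := by
  have a3 : a 3 = 4 := by have h := hodd 2 (by norm_num); norm_num [h1] at h; exact h
  have a4 : a 4 = 7 := by have h := heven 2 (by norm_num); norm_num [h1, h2] at h; exact h
  have a5 : a 5 = 9 := by have h := hodd 3 (by norm_num); norm_num [h2] at h; exact h
  have a6 : a 6 = 11 := by have h := heven 3 (by norm_num); norm_num [h2, a3] at h; exact h
  have a7 : a 7 = 12 := by have h := hodd 4 (by norm_num); norm_num [a3] at h; exact h
  have a8 : a 8 = 16 := by have h := heven 4 (by norm_num); norm_num [a3, a4] at h; exact h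
  have a9 : a 9 = 19 := by have h := hodd 5 (by norm_num); norm_num [a4] at h; exact h
  have a10 : a 10 = 22 := by have h := heven 5 (by norm_num); norm_num [a4, a5] at h; exact h
  have a11 : a 11 = 24 := by have h := hodd 6 (by norm_num); norm_num [a5] at h; exact h
  have a12 : a 12 = 27 := by have h := heven 6 (by norm_num); norm_num [a5, a6] at h; exact h
  have a13 : a 13 = 29 := by have h := hodd 7 (by norm_num); norm_num [a6] at h; exact h
  have a14 : a 14 = 31 := by have h := heven 7 (by norm_num); norm_num [a6, a7] at h; exact h
  have a15 : a 15 = 32 := by have h := hodd 8 (by norm_num); norm_num [a7] at h; exact h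
  have a16 : a 16 = 37 := by have h := heven 8 (by norm_num); norm_num [a7, a8] at h; exact h
  have a17 : a 17 = 41 := by have h := hodd 9 (by norm_num); norm_num [a8] at h; exact h
  have a18 : a 18 = 45 := by have h := heven 9 (by norm_num); norm_num [a8, a9] at h; exact h
  have a19 : a 19 = 48 := by have h := hodd 10 (by norm_num); norm_num [a9] at h; exact h
  have a20 : a 20 = 52 := by have h := heven 10 (by norm_num); norm_num [a9, a10] at h; exact h
  have a21 : a 21 = 55 := by have h := hodd 11 (by norm_num); norm_num [a10] at h; exact h
  have a22 : a 22 = 58 := by have h := heven 11 (by norm_num); norm_num [a10, a11] at h; exact h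
  intro n
  induction n using Nat.strong_induction_on with
  | _ n ih =>
    intro hn
    by_cases hsmall : n ≤ 22
    · interval_cases n
      · rw [a11]; simpa using base_lem 24 11 (by norm_num) (by norm_num)
      · rw [a12]; simpa using base_lem 27 12 (by norm_num) (by norm_num)
      · rw [a13]; simpa using base_lem 29 13 (by norm_num) (by norm_num)
      · rw [a14]; simpa using base_lem 31 14 (by norm_num) (by norm_num)
      · rw [a15]; simpa using base_lem 32 15 (by norm_num) (by norm_num)
      · rw [a16]; simpa using base_lem 37 16 (by norm_num) (by norm_num)
      · rw [a17]; simpa using base_lem 41 17 (by norm_num) (by norm_num)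
      · rw [a18]; simpa using base_lem 45 18 (by norm_num) (by norm_num)
      · rw [a19]; simpa using base_lem 48 19 (by norm_num) (by norm_num)
      · rw [a20]; simpa using base_lem 52 20 (by norm_num) (by norm_num)
      · rw [a21]; simpa using base_lem 55 21 (by norm_num) (by norm_num)
      · rw [a22]; simpa using base_lem 58 22 (by norm_num) (by norm_num)
    · push_neg at hsmall
      rcases Nat.even_or_odd n with he | ho
      · -- n = 2*k, k ≥ 12
        obtain ⟨k, hk⟩ := he
        have hk2 : 12 ≤ k := by omega
        have hne : n = 2 * k := by omega
        have hkm : 10 < k - 1 := by omega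
        have ih1 := ih (k - 1) (by omega) hkm
        have ih2 := ih k (by omega) (by omega)
        have hc : ((k - 1 : ℕ) : ℝ) = (k : ℝ) - 1 := by
          have : (1:ℕ) ≤ k := by omega
          push_cast [this]; ring
        rw [hc] at ih1
        have hKR : (12:ℝ) ≤ (k:ℝ) := by exact_mod_cast hk2
        have key := even_step _ _ _ hKR ih1 ih2
        have hav := heven k (by omega)
        rw [hne, hav]
        push_cast
        convert key using 2 <;> push_cast <;> ring
      · -- n = 2*k - 1, k ≥ 12
        obtain ⟨j, hj⟩ := ho
        set k := j + 1 with hkdef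
        clear_value k
        have hk2 : 12 ≤ k := by omega
        have hne : n = 2 * k - 1 := by omega
        have hkm : 10 < k - 1 := by omega
        have ih1 := ih (k - 1) (by omega) hkm
        have hc : ((k - 1 : ℕ) : ℝ) = (k : ℝ) - 1 := by
          have : (1:ℕ) ≤ k := by omega
          push_cast [this]; ring
        rw [hc] at ih1
        have hKR : (12:ℝ) ≤ (k:ℝ) := by exact_mod_cast hk2
        have key := odd_step _ _ hKR ih1
        have hav := hodd k (by omega)
        rw [hne, hav]
        have hcn : ((2 * k - 1 : ℕ) : ℝ) = 2 * (k:ℝ) - 1 := by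
          have : (1:ℕ) ≤ 2 * k := by omega
          push_cast [this]; ring
        rw [hcn]
        exact_mod_cast key
end

section
/- For the sequence a with a_1 = 1, a_2 = 3, a_{2n-1} = 2a_{n-1} + n, a_{2n} = a_{n-1} + a_n + n + 1 (n ≥ 2), one has limsup_{n→∞} a_n/(n·log₂ n) = 1/2. -/
open Filter

lemma key_bounds (a : ℕ → ℕ) (h1 : a 1 = 1) (h2 : a 2 = 3)
    (hodd : ∀ n : ℕ, 2 ≤ n → a (2 * n - 1) = 2 * a (n - 1) + n)
    (heven : ∀ n : ℕ, 2 ≤ n → a (2 * n) = a (n - 1) + a n + n + 1) :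
    ∀ n k : ℕ, 2 ^ k ≤ n → n < 2 ^ (k + 1) →
      (k + 2) * n + (k + 2) ≤ 2 * a n + 2 ^ (k + 1) ∧
      2 * a n ≤ (k + 1) * n + 2 ^ (k + 1) := by
  intro n
  induction n using Nat.strong_induction_on with
  | _ n ih =>
  intro k hk1 hk2
  have hn0 : 1 ≤ n := le_trans Nat.one_le_two_pow hk1
  rcases eq_or_lt_of_le hn0 with h | hn1
  · -- n = 1
    have hk0 : k = 0 := by
      by_contra hk
      have : 1 < 2 ^ k := Nat.one_lt_two_pow hk
      omega
    subst hk0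
    simp [← h, h1]
  rcases eq_or_lt_of_le (show 2 ≤ n by omega) with h | hn2
  · -- n = 2
    subst h
    have hk0 : k = 1 := by
      rcases k with _ | _ | k
      · norm_num at hk2
      · rfl
      · have : 2 ^ 2 ≤ 2 ^ (k + 2) := Nat.pow_le_pow_right (by norm_num) (by omega)
        have : (4:ℕ) ≤ 2 ^ (k + 2) := by norm_num at this ⊢; omega
        omega
    subst hk0
    norm_num [h2]
  -- n ≥ 3
  have hkpos : 1 ≤ k := by
    by_contra hk
    have hk0 : k = 0 := by omega
    subst hk0
    norm_num at hk2
    omega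
  obtain ⟨j, rfl⟩ : ∃ j, k = j + 1 := ⟨k - 1, by omega⟩
  have hp1 : (2:ℕ) ^ (j + 1) = 2 * 2 ^ j := by ring
  have hp2 : (2:ℕ) ^ (j + 1 + 1) = 4 * 2 ^ j := by ring
  have hx1 : 1 ≤ (2:ℕ) ^ j := Nat.one_le_two_pow
  rcases Nat.even_or_odd n with ⟨m, hm⟩ | ⟨m, hm⟩
  · -- n = m + m even, m ≥ 2
    have hm2 : 2 ≤ m := by omega
    have ha : a (2 * m) = a (m - 1) + a m + m + 1 := heven m hm2
    have hbm : 2 ^ j ≤ m ∧ m < 2 ^ (j + 1) := by constructor <;> omega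
    have ihm := ih m (by omega) j hbm.1 hbm.2
    rcases eq_or_lt_of_le hbm.1 with he | hlt
    · -- m = 2 ^ j, m - 1 in block j - 1
      have hj1 : 1 ≤ j := by
        by_contra hj
        have : j = 0 := by omega
        subst this
        omega
      obtain ⟨i, rfl⟩ : ∃ i, j = i + 1 := ⟨j - 1, by omega⟩
      have hq1 : (2:ℕ) ^ (i + 1) = 2 * 2 ^ i := by ring
      have hy1 : 1 ≤ (2:ℕ) ^ i := Nat.one_le_two_pow
      have hbm1 : 2 ^ i ≤ m - 1 ∧ m - 1 < 2 ^ (i + 1) := by constructor <;> omega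
      have ihm1 := ih (m - 1) (by omega) i hbm1.1 hbm1.2
      obtain ⟨q, hq, hq2⟩ : ∃ q, m - 1 = q ∧ q + 1 = 2 * 2 ^ i := ⟨m - 1, rfl, by omega⟩
      rw [hq] at ihm1
      obtain ⟨L1, U1⟩ := ihm1
      obtain ⟨L2, U2⟩ := ihm
      rw [hm, show m + m = 2 * m from by ring, ha, hq]
      have hb1 : (i + 2) * q + (i + 2) = (i + 2) * (2 * 2 ^ i) := by rw [← hq2]; ring
      have hb2 : (i + 1) * q + (i + 1) = (i + 1) * (2 * 2 ^ i) := by rw [← hq2]; ring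
      have hmval : m = 2 * 2 ^ i := by omega
      subst hmval
      constructor <;> linarith [hy1, L1, U1, L2, U2, hb1, hb2]
    · -- m ≥ 2^j + 1, m - 1 in block j
      have hj1 : 1 ≤ j := by
        by_contra hj
        have : j = 0 := by omega
        subst this
        omega
      have hbm1 : 2 ^ j ≤ m - 1 ∧ m - 1 < 2 ^ (j + 1) := by constructor <;> omega
      have ihm1 := ih (m - 1) (by omega) j hbm1.1 hbm1.2
      obtain ⟨p, hp⟩ : ∃ p, m = p + 1 := ⟨m - 1, by omega⟩
      subst hp
      simp only [Nat.add_sub_cancel] at ihm1 ha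
      obtain ⟨L1, U1⟩ := ihm1
      obtain ⟨L2, U2⟩ := ihm
      rw [hm, show p + 1 + (p + 1) = 2 * (p + 1) from by ring, ha]
      constructor <;> linarith [L1, U1, L2, U2, hj1, hx1]
  · -- n = 2 * m + 1 odd
    have hm1 : 1 ≤ m := by omega
    have ha : a (2 * (m + 1) - 1) = 2 * a (m + 1 - 1) + (m + 1) := hodd (m + 1) (by omega)
    simp only [Nat.add_sub_cancel] at ha
    have ha' : a (2 * m + 1) = 2 * a m + (m + 1) := by
      have he : 2 * (m + 1) - 1 = 2 * m + 1 := by omega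
      rwa [he] at ha
    have hbm : 2 ^ j ≤ m ∧ m < 2 ^ (j + 1) := by constructor <;> omega
    obtain ⟨L1, U1⟩ := ih m (by omega) j hbm.1 hbm.2
    rw [hm, ha']
    constructor <;> linarith [L1, U1, hx1]


theorem stmt_2 (a : ℕ → ℕ) (h1 : a 1 = 1) (h2 : a 2 = 3)
    (hodd : ∀ n : ℕ, 2 ≤ n → a (2 * n - 1) = 2 * a (n - 1) + n)
    (heven : ∀ n : ℕ, 2 ≤ n → a (2 * n) = a (n - 1) + a n + n + 1) :
    Filter.limsup (fun n : ℕ => (a n : ℝ) / ((n : ℝ) * Real.logb 2 (n : ℝ))) Filter.atTop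
      = 1 / 2 := by
  have key := key_bounds a h1 h2 hodd heven
  have hlog : Tendsto (fun n : ℕ => Real.logb 2 (n : ℝ)) atTop atTop :=
    (Real.tendsto_logb_atTop one_lt_two).comp tendsto_natCast_atTop_atTop
  have hinv : Tendsto (fun n : ℕ => (Real.logb 2 (n : ℝ))⁻¹) atTop (nhds 0) :=
    hlog.inv_tendsto_atTop
  have hg : Tendsto (fun n : ℕ => 1 / 2 - (Real.logb 2 (n : ℝ))⁻¹ / 2) atTop
      (nhds (1 / 2 : ℝ)) := by
    have h := Tendsto.sub (tendsto_const_nhds :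
      Tendsto (fun _ : ℕ => (1/2:ℝ)) atTop (nhds (1/2))) (hinv.div_const 2)
    simpa using h
  have hh : Tendsto (fun n : ℕ => 1 / 2 + 3 * (Real.logb 2 (n : ℝ))⁻¹ / 2) atTop
      (nhds (1 / 2 : ℝ)) := by
    have h := Tendsto.add (tendsto_const_nhds :
      Tendsto (fun _ : ℕ => (1/2:ℝ)) atTop (nhds (1/2))) ((hinv.const_mul 3).div_const 2)
    simpa using h
  refine Filter.Tendsto.limsup_eq ?_
  refine tendsto_of_tendsto_of_tendsto_of_le_of_le' hg hh ?_ ?_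
  · -- lower bound
    filter_upwards [eventually_ge_atTop 2] with n hn2
    set k := Nat.log 2 n with hkdef
    have hk1 : 2 ^ k ≤ n := Nat.pow_log_le_self 2 (by omega)
    have hk2 : n < 2 ^ (k + 1) := Nat.lt_pow_succ_log_self (by norm_num) n
    obtain ⟨KL, KU⟩ := key n k hk1 hk2
    have hpow : (2:ℕ) ^ (k + 1) = 2 * 2 ^ k := by ring
    have hkn : k * n ≤ 2 * a n := by
      have e : (k + 2) * n = k * n + 2 * n := by ring
      omega
    set L := Real.logb 2 (n : ℝ) with hL
    have hn0R : (2:ℝ) ≤ (n : ℝ) := by exact_mod_cast hn2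
    have hnpos : (0:ℝ) < (n : ℝ) := by linarith
    have hkpos : 1 ≤ k := Nat.log_pos (by norm_num) hn2
    have hkL : (k : ℝ) ≤ L := by
      rw [hL, Real.le_logb_iff_rpow_le one_lt_two hnpos, Real.rpow_natCast]
      exact_mod_cast hk1
    have hLk : L ≤ (k : ℝ) + 1 := by
      rw [hL, Real.logb_le_iff_le_rpow one_lt_two hnpos]
      have : ((k : ℝ) + 1) = ((k + 1 : ℕ) : ℝ) := by push_cast; ring
      rw [this, Real.rpow_natCast]
      exact_mod_cast hk2.le
    have hL1 : 1 ≤ L := le_trans (by exact_mod_cast hkpos) hkL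
    have hL0 : (0:ℝ) < L := by linarith
    have hLne : L ≠ 0 := ne_of_gt hL0
    have hnL : (0:ℝ) < (n : ℝ) * L := by positivity
    rw [le_div_iff₀ hnL]
    have expand : (1 / 2 - L⁻¹ / 2) * ((n : ℝ) * L) = (L * n - n) / 2 := by
      field_simp
    rw [expand]
    have h1' : (k : ℝ) * n ≤ 2 * a n := by exact_mod_cast hkn
    have h2' : (L - 1) * n ≤ (k : ℝ) * n := by nlinarith
    nlinarith
  · -- upper bound
    filter_upwards [eventually_ge_atTop 2] with n hn2
    set k := Nat.log 2 n with hkdef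
    have hk1 : 2 ^ k ≤ n := Nat.pow_log_le_self 2 (by omega)
    have hk2 : n < 2 ^ (k + 1) := Nat.lt_pow_succ_log_self (by norm_num) n
    obtain ⟨KL, KU⟩ := key n k hk1 hk2
    have hpow : (2:ℕ) ^ (k + 1) = 2 * 2 ^ k := by ring
    have hkn : 2 * a n ≤ k * n + 3 * n := by
      have e : (k + 1) * n = k * n + n := by ring
      omega
    set L := Real.logb 2 (n : ℝ) with hL
    have hn0R : (2:ℝ) ≤ (n : ℝ) := by exact_mod_cast hn2
    have hnpos : (0:ℝ) < (n : ℝ) := by linarith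
    have hkpos : 1 ≤ k := Nat.log_pos (by norm_num) hn2
    have hkL : (k : ℝ) ≤ L := by
      rw [hL, Real.le_logb_iff_rpow_le one_lt_two hnpos, Real.rpow_natCast]
      exact_mod_cast hk1
    have hL1 : 1 ≤ L := le_trans (by exact_mod_cast hkpos) hkL
    have hL0 : (0:ℝ) < L := by linarith
    have hLne : L ≠ 0 := ne_of_gt hL0
    have hnL : (0:ℝ) < (n : ℝ) * L := by positivity
    rw [div_le_iff₀ hnL]
    have expand : (1 / 2 + 3 * L⁻¹ / 2) * ((n : ℝ) * L) = (L * n + 3 * n) / 2 := by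
      field_simp
    rw [expand]
    have h1' : 2 * (a n : ℝ) ≤ (k : ℝ) * n + 3 * n := by exact_mod_cast hkn
    have h2' : (k : ℝ) * n ≤ L * n := by nlinarith
    nlinarith
end

section
/- If X = {x_1,…,x_M} and Y = {y_1,…,y_N} are spherical t-designs on S^{m-1} and S^{n-1} respectively, and T = {t_1,…,t_K} ⊂ [-1,1] is a Chebyshev-type quadrature of degree t with weight ω_{m,n}, then for every monomial p(z) = z_1^{α_1}···z_{m+n}^{α_{m+n}} of total degree ≤ t, the average of p over the multiset L = {(√((1-t_k)/2) x_i, √((1+t_k)/2) y_j)} equals I₁·I₂·I₃, where I₁ is the normalized average of x_1^{α_1}···x_m^{α_m} over S^{m-1}, I₂ is the normalized average of y_1^{α_{m+1}}···y_n^{α_{m+n}} over S^{n-1}, and I₃ = (1/K) Σ_k ((1-t_k)/2)^{(α_1+…+α_m)/2} ((1+t_k)/2)^{(α_{m+1}+…+α_{m+n})/2} (with the convention that the multiset average factorizes as stated). -/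
open MeasureTheory Real

/-- Surface (Hausdorff) measure concentrated on the unit sphere of `EuclideanSpace ℝ ι`. -/
noncomputable def sphereSurface (ι : Type) [Fintype ι] : Measure (EuclideanSpace ℝ ι) :=
  (μH[(Fintype.card ι : ℝ) - 1]).restrict (Metric.sphere (0 : EuclideanSpace ℝ ι) 1)

/-- `x` (a finite family of points, a multiset with multiplicity) is a spherical `t`-design on
the unit sphere of `EuclideanSpace ℝ ι`: all points lie on the sphere and the average over the
points of any polynomial of total degree `≤ t` equals its average over the sphere with respect
to normalized surface measure. -/
noncomputable def IsSphericalDesign (ι κ : Type) [Fintype ι] [Fintype κ] (t : ℕ)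
    (x : κ → EuclideanSpace ℝ ι) : Prop :=
  (∀ i, x i ∈ Metric.sphere (0 : EuclideanSpace ℝ ι) 1) ∧
  ∀ p : MvPolynomial ι ℝ, p.totalDegree ≤ t →
    (∫ z, MvPolynomial.eval (fun i => z i) p ∂(sphereSurface ι)) /
        (sphereSurface ι Set.univ).toReal
      = (∑ i, MvPolynomial.eval (fun j => x i j) p) / (Fintype.card κ : ℝ)

/-- The Jacobi weight `ω_{m,n}(x) = (1-x)^{(m-2)/2} (1+x)^{(n-2)/2}`. -/
noncomputable def jacobiWeight (m n : ℕ) (x : ℝ) : ℝ :=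
  (1 - x) ^ (((m : ℝ) - 2) / 2) * (1 + x) ^ (((n : ℝ) - 2) / 2)

/-- `T` is a Chebyshev-type quadrature of degree `t` with weight `ω` on `[-1,1]`. -/
noncomputable def IsChebyshevQuad (ω : ℝ → ℝ) (t K : ℕ) (T : Fin K → ℝ) : Prop :=
  (∀ k, T k ∈ Set.Icc (-1 : ℝ) 1) ∧
  ∀ p : Polynomial ℝ, p.natDegree ≤ t →
    ∫ x in Set.Icc (-1 : ℝ) 1, p.eval x * ω x
      = (1 / (K : ℝ)) * (∫ x in Set.Icc (-1 : ℝ) 1, ω x) * ∑ k, p.eval (T k)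

/-- The point of the unit sphere in `ℝ^m × ℝ^n` built from `x`, `y` and scalars `s, c`. -/
noncomputable def gluePt (m n : ℕ) (x : EuclideanSpace ℝ (Fin m)) (y : EuclideanSpace ℝ (Fin n))
    (s c : ℝ) : EuclideanSpace ℝ (Fin m ⊕ Fin n) :=
  WithLp.toLp 2 (fun i => Sum.elim (fun j => s * x j) (fun j => c * y j) i)

/-! A monomial evaluated at a glued point splits as the scaling factor `s^|α_x| c^|α_y|` times a
monomial in `x` and one in `y`, so the average over the product multiset factorizes into three
averages; the design property turns the first two into sphere averages. -/

theorem MvPolynomial.totalDegree_prod_X_pow_le {ι R : Type*} [Fintype ι] [CommSemiring R]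
    [Nontrivial R] (β : ι → ℕ) :
    (∏ l, (X l : MvPolynomial ι R) ^ β l).totalDegree ≤ ∑ l, β l :=
  (totalDegree_finsetProd _ _).trans_eq (by simp only [totalDegree_X_pow])

theorem IsSphericalDesign.average_monomial {ι κ : Type} [Fintype ι] [Fintype κ] {t : ℕ}
    {x : κ → EuclideanSpace ℝ ι} (hx : IsSphericalDesign ι κ t x)
    (β : ι → ℕ) (hβ : ∑ l, β l ≤ t) :
    (∫ z, (∏ l, (z l) ^ β l) ∂(sphereSurface ι)) / (sphereSurface ι Set.univ).toReal
      = (∑ i, ∏ l, (x i l) ^ β l) / (Fintype.card κ : ℝ) := by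
  simpa using hx.2 _ ((MvPolynomial.totalDegree_prod_X_pow_le (R := ℝ) β).trans hβ)

theorem prod_gluePt_pow {m n : ℕ} (x : EuclideanSpace ℝ (Fin m)) (y : EuclideanSpace ℝ (Fin n))
    (s c : ℝ) (α : Fin m ⊕ Fin n → ℕ) :
    ∏ l, gluePt m n x y s c l ^ α l
      = s ^ (∑ l, α (Sum.inl l)) * c ^ (∑ l, α (Sum.inr l))
        * (∏ l, x l ^ α (Sum.inl l)) * ∏ l, y l ^ α (Sum.inr l) := by
  simp only [Fintype.prod_sum_type, gluePt, WithLp.ofLp_toLp, Sum.elim_inl, Sum.elim_inr,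
    mul_pow, Finset.prod_mul_distrib, Finset.prod_pow_eq_pow_sum]
  ring

theorem average_triple_sum_mul_eq_mul_averages {κ ι ν : Type*} [Fintype κ] [Fintype ι] [Fintype ν]
    (a : κ → ℝ) (b : ι → ℝ) (c : ν → ℝ) :
    (∑ k, ∑ i, ∑ j, a k * b i * c j)
        / ((Fintype.card κ : ℝ) * Fintype.card ι * Fintype.card ν)
      = ((∑ i, b i) / Fintype.card ι) * ((∑ j, c j) / Fintype.card ν)
        * ((1 / (Fintype.card κ : ℝ)) * ∑ k, a k) := by
  simp only [← Finset.sum_mul, ← Finset.mul_sum, div_eq_mul_inv, mul_inv]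
  ring

theorem stmt_13_general (m n t M N K : ℕ)
    (X : Fin M → EuclideanSpace ℝ (Fin m))
    (hX : IsSphericalDesign (Fin m) (Fin M) t X)
    (Y : Fin N → EuclideanSpace ℝ (Fin n))
    (hY : IsSphericalDesign (Fin n) (Fin N) t Y)
    (T : Fin K → ℝ)
    (α : Fin m ⊕ Fin n → ℕ) (hα : ∑ l, α l ≤ t) :
    (∑ k : Fin K, ∑ i : Fin M, ∑ j : Fin N, ∏ l,
        (gluePt m n (X i) (Y j)
          (Real.sqrt ((1 - T k) / 2)) (Real.sqrt ((1 + T k) / 2)) l) ^ α l)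
        / ((K : ℝ) * M * N)
      = ((∫ x, (∏ l : Fin m, (x l) ^ α (Sum.inl l)) ∂(sphereSurface (Fin m))) /
            (sphereSurface (Fin m) Set.univ).toReal) *
        ((∫ y, (∏ s : Fin n, (y s) ^ α (Sum.inr s)) ∂(sphereSurface (Fin n))) /
            (sphereSurface (Fin n) Set.univ).toReal) *
        ((1 / (K : ℝ)) * ∑ k : Fin K,
          Real.sqrt ((1 - T k) / 2) ^ (∑ l : Fin m, α (Sum.inl l)) *
          Real.sqrt ((1 + T k) / 2) ^ (∑ s : Fin n, α (Sum.inr s))) := by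
  have hsum := Fintype.sum_sum_type α
  rw [hX.average_monomial _ (by omega), hY.average_monomial _ (by omega)]
  simp only [prod_gluePt_pow]
  simpa using average_triple_sum_mul_eq_mul_averages
    (fun k => √((1 - T k) / 2) ^ (∑ l, α (Sum.inl l)) * √((1 + T k) / 2) ^ (∑ l, α (Sum.inr l)))
    (fun i => ∏ l, X i l ^ α (Sum.inl l)) (fun j => ∏ l, Y j l ^ α (Sum.inr l))

theorem stmt_13 (m n t M N K : ℕ) (hm : 1 ≤ m) (hn : 1 ≤ n)
    (X : Fin M → EuclideanSpace ℝ (Fin m))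
    (hX : IsSphericalDesign (Fin m) (Fin M) t X)
    (Y : Fin N → EuclideanSpace ℝ (Fin n))
    (hY : IsSphericalDesign (Fin n) (Fin N) t Y)
    (T : Fin K → ℝ) (hT : IsChebyshevQuad (jacobiWeight m n) t K T)
    (α : Fin m ⊕ Fin n → ℕ) (hα : ∑ l, α l ≤ t) :
    (∑ k : Fin K, ∑ i : Fin M, ∑ j : Fin N, ∏ l,
        (gluePt m n (X i) (Y j)
          (Real.sqrt ((1 - T k) / 2)) (Real.sqrt ((1 + T k) / 2)) l) ^ α l)
        / ((K : ℝ) * M * N)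
      = ((∫ x, (∏ l : Fin m, (x l) ^ α (Sum.inl l)) ∂(sphereSurface (Fin m))) /
            (sphereSurface (Fin m) Set.univ).toReal) *
        ((∫ y, (∏ s : Fin n, (y s) ^ α (Sum.inr s)) ∂(sphereSurface (Fin n))) /
            (sphereSurface (Fin n) Set.univ).toReal) *
        ((1 / (K : ℝ)) * ∑ k : Fin K,
          Real.sqrt ((1 - T k) / 2) ^ (∑ l : Fin m, α (Sum.inl l)) *
          Real.sqrt ((1 + T k) / 2) ^ (∑ s : Fin n, α (Sum.inr s))) :=
  stmt_13_general m n t M N K X hX Y hY T α hα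
end

section
/- If the sequence a with a_1 = 1, a_2 = 3, a_{2n-1} = 2a_{n-1} + n, a_{2n} = a_{n-1} + a_n + n + 1 satisfies a_k < (k/2)·log₂(2k) for all k with 10 < k ≤ n for some n ≥ 21, then a_{n+1} < ((n+1)/2)·log₂(2(n+1)). -/
/-!
Write `B x = (x / 2) log₂ (2x)` (`logBound`). Since `B (2x + 1) = (x + 1/2) (1 + log₂ (2x + 1))` and
`B (2x + 2) = (x + 1) (1 + log₂ (2x + 2))`, the recurrences turn the bounds `a_k < B k` at the
indices `k ≈ (n+1)/2` into `a_{n+1} < B (n+1)`, using only that `log₂` is monotone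
and `log₂ (2x + 1) ≥ 1`, `log₂ (2x + 2) ≥ 2`. The single exception is `n = 21`, where the index
`10` lies outside the hypothesis (indeed `a_10 = 22 > B 10`); there `a_10` is computed directly
and `22^11 ≥ 2^46` leaves enough room.
-/

open Real

noncomputable def logBound (x : ℝ) : ℝ := x / 2 * logb 2 (2 * x)

lemma logb_two_two_mul {x : ℝ} (hx : 0 < x) : logb 2 (2 * x) = 1 + logb 2 x := by
  rw [logb_mul two_ne_zero hx.ne', logb_self_eq_one one_lt_two]

lemma le_logb_two {x : ℝ} {m : ℕ} (hx : 2 ^ m ≤ x) : (m : ℝ) ≤ logb 2 x := by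
  calc (m : ℝ) = logb 2 (2 ^ m) := by simp [logb_pow]
    _ ≤ logb 2 x := logb_le_logb_of_le one_lt_two (by positivity) hx

lemma logBound_two_mul_add_one {x : ℝ} (hx : 1 / 2 ≤ x) :
    2 * logBound x + (x + 1) ≤ logBound (2 * x + 1) := by
  have hmono : logb 2 (2 * x) ≤ logb 2 (2 * x + 1) :=
    logb_le_logb_of_le one_lt_two (by linarith) (by linarith)
  have hone : 1 ≤ logb 2 (2 * x + 1) := by
    simpa using le_logb_two (x := 2 * x + 1) (m := 1) (by linarith)
  unfold logBound
  rw [logb_two_two_mul (by linarith : (0 : ℝ) < 2 * x + 1)]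
  nlinarith

lemma logBound_two_mul_add_two {x : ℝ} (hx : 1 ≤ x) :
    logBound x + logBound (x + 1) + (x + 2) ≤ logBound (2 * x + 2) := by
  have hmono : logb 2 (2 * x) ≤ logb 2 (2 * x + 2) :=
    logb_le_logb_of_le one_lt_two (by linarith) (by linarith)
  have htwo : 2 ≤ logb 2 (2 * x + 2) := by
    simpa using le_logb_two (x := 2 * x + 2) (m := 2) (by linarith)
  unfold logBound
  rw [logb_two_two_mul (by linarith : (0 : ℝ) < 2 * x + 2), show 2 * (x + 1) = 2 * x + 2 by ring]
  nlinarith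

lemma logBound_twentytwo : 34 + logBound 11 ≤ logBound 22 := by
  have h : (46 : ℝ) ≤ 11 * logb 2 22 := by
    have := le_logb_two (x := (22 : ℝ) ^ 11) (m := 46) (by norm_num)
    rwa [logb_pow, Nat.cast_ofNat, Nat.cast_ofNat] at this
  unfold logBound
  rw [logb_two_two_mul (by norm_num : (0 : ℝ) < 22)]
  norm_num
  linarith

section Recurrence

variable {a : ℕ → ℕ}

lemma rec_two_mul_add_one (hodd : ∀ n : ℕ, 2 ≤ n → a (2 * n - 1) = 2 * a (n - 1) + n)
    {k : ℕ} (hk : 1 ≤ k) : a (2 * k + 1) = 2 * a k + (k + 1) := by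
  simpa [show 2 * (k + 1) - 1 = 2 * k + 1 by omega] using hodd (k + 1) (by omega)

lemma rec_two_mul_add_two (heven : ∀ n : ℕ, 2 ≤ n → a (2 * n) = a (n - 1) + a n + n + 1)
    {k : ℕ} (hk : 1 ≤ k) : a (2 * k + 2) = a k + a (k + 1) + (k + 1) + 1 := by
  simpa [show 2 * (k + 1) = 2 * k + 2 by omega] using heven (k + 1) (by omega)

lemma rec_apply_ten (h1 : a 1 = 1) (h2 : a 2 = 3)
    (hodd : ∀ n : ℕ, 2 ≤ n → a (2 * n - 1) = 2 * a (n - 1) + n)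
    (heven : ∀ n : ℕ, 2 ≤ n → a (2 * n) = a (n - 1) + a n + n + 1) : a 10 = 22 := by
  have h4 : a 4 = 7 := by simpa [h1, h2] using heven 2 le_rfl
  have h5 : a 5 = 9 := by simpa [h2] using hodd 3 (by norm_num)
  simpa [h4, h5] using heven 5 (by norm_num)

end Recurrence

theorem stmt_15 (a : ℕ → ℕ) (h1 : a 1 = 1) (h2 : a 2 = 3)
    (hodd : ∀ n : ℕ, 2 ≤ n → a (2 * n - 1) = 2 * a (n - 1) + n)
    (heven : ∀ n : ℕ, 2 ≤ n → a (2 * n) = a (n - 1) + a n + n + 1)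
    (n : ℕ) (hn : 21 ≤ n)
    (hind : ∀ k : ℕ, 10 < k → k ≤ n → (a k : ℝ) < (k : ℝ) / 2 * Real.logb 2 (2 * k)) :
    (a (n + 1) : ℝ) < ((n : ℝ) + 1) / 2 * Real.logb 2 (2 * ((n : ℝ) + 1)) := by
  change (a (n + 1) : ℝ) < logBound (n + 1)
  obtain ⟨k, rfl | rfl⟩ := Nat.even_or_odd' n
  · have hk : (a k : ℝ) < logBound k := hind k (by omega) (by omega)
    have hk11 : (11 : ℝ) ≤ k := by exact_mod_cast (by omega : 11 ≤ k)
    have hstep := logBound_two_mul_add_one (x := k) (by linarith)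
    rw [rec_two_mul_add_one hodd (by omega)]
    push_cast
    linarith
  · have hk1 : (a (k + 1) : ℝ) < logBound (k + 1) := by
      simpa [logBound] using hind (k + 1) (by omega) (by omega)
    rw [show 2 * k + 1 + 1 = 2 * k + 2 by rfl, rec_two_mul_add_two heven (by omega)]
    push_cast
    rw [show (2 * k + 1 + 1 : ℝ) = 2 * k + 2 by ring]
    rcases (show k = 10 ∨ 11 ≤ k by omega) with rfl | hk11
    · have := logBound_twentytwo
      rw [rec_apply_ten h1 h2 hodd heven]
      norm_num at hk1 ⊢
      linarith
    · have hk : (a k : ℝ) < logBound k := hind k (by omega) (by omega)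
      have hstep := logBound_two_mul_add_two (x := k) (by exact_mod_cast (by omega : 1 ≤ k))
      linarith
end
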